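/- Fix an integer r ≥ 1 and a finite color set of size l. If an ideal X of edge-colored complete graphs (colorings (n,χ) with χ : 2-subsets of [n] → [l], under discrete containment) contains an r-rich coloring for every r ≥ 1, then |X_n| ≥ n for all n ≥ 1. -/

import Mathlib

/-! An `n`-rich coloring on `2n-1` vertices contains `n` pairwise distinct colorings on `n`
vertices, and an ideal containing it contains all of them. The copies are chosen so that each one
sees the prescribed `b`-edge in a different place, or not at all; the reversed cases follow by
reversing everything. -/

/-- A (directed representation of an) edge: a pair of vertices `p` with `p.1 < p.2`. -/
abbrev Edge (n : ℕ) := {p : Fin n × Fin n // p.1 < p.2}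

/-- An edge-`C`-colored complete graph: a number of vertices together with a coloring
of all edges by elements of `C`. -/
abbrev Coloring (C : Type) := (n : ℕ) × (Edge n → C)

/-- Build an edge from natural numbers `i < j < n`. -/
def mkE {n : ℕ} (i j : ℕ) (hij : i < j) (hj : j < n) : Edge n :=
  ⟨(⟨i, lt_trans hij hj⟩, ⟨j, hj⟩), Fin.mk_lt_mk.mpr hij⟩

/-- The image of an edge under a strictly increasing vertex map. -/
def edgeMap {a b : ℕ} (f : Fin a → Fin b) (hf : StrictMono f) (e : Edge a) : Edge b :=
  ⟨(f e.1.1, f e.1.2), hf e.2⟩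

/-- Containment of colorings: `K ⪯ L` via a strictly increasing vertex map that sends
the color of each edge to a `le`-larger color. -/
def ColLe {C : Type} (le : C → C → Prop) (K L : Coloring C) : Prop :=
  ∃ f : Fin K.1 → Fin L.1, ∃ hf : StrictMono f,
    ∀ e : Edge K.1, le (K.2 e) (L.2 (edgeMap f hf e))

/-- A lower ideal of colorings. -/
def IsIdeal {C : Type} (le : C → C → Prop) (X : Set (Coloring C)) : Prop :=
  ∀ K L : Coloring C, ColLe le K L → L ∈ X → K ∈ X

/-- The reversal of an edge under the order-reversing permutation of the vertices. -/
def revE {n : ℕ} (e : Edge n) : Edge n :=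
  ⟨(e.1.2.rev, e.1.1.rev), Fin.rev_lt_rev.mpr e.2⟩

/-- The reversal of a coloring. -/
def revC {n : ℕ} {C : Type} (χ : Edge n → C) : Edge n → C := fun e => χ (revE e)

/-- A coloring on `2r-1` vertices is of type 1 (0-indexed version of:
`χ({i,i+1}) = a` for `1 ≤ i ≤ r-1` and `χ({r,r+1}) = b` for two distinct colors). -/
def Type1 {C : Type} (r : ℕ) (χ : Edge (2 * r - 1) → C) : Prop :=
  ∃ a b : C, a ≠ b ∧
    (∀ (t : ℕ) (h : t + 2 ≤ r), χ (mkE t (t + 1) (by omega) (by omega)) = a) ∧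
    (∀ h : r < 2 * r - 1, χ (mkE (r - 1) r (by omega) h) = b)

/-- A coloring on `2r-1` vertices is of type 2 (0-indexed version of:
`χ({1,i}) = a` for `2 ≤ i ≤ r` and `χ({1,r+1}) = b` for two distinct colors). -/
def Type2 {C : Type} (r : ℕ) (χ : Edge (2 * r - 1) → C) : Prop :=
  ∃ a b : C, a ≠ b ∧
    (∀ (t : ℕ) (h1 : 1 ≤ t) (h2 : t ≤ r - 1), χ (mkE 0 t (by omega) (by omega)) = a) ∧
    (∀ h : r < 2 * r - 1, χ (mkE 0 r (by omega) h) = b)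

/-- An `r`-rich coloring: on `2r-1` vertices, of type 1 or type 2, in it or its reversal. -/
def Rich {C : Type} (r : ℕ) (χ : Edge (2 * r - 1) → C) : Prop :=
  Type1 r χ ∨ Type1 r (revC χ) ∨ Type2 r χ ∨ Type2 r (revC χ)

/-- `(n,χ)` contains an `r`-rich coloring (with respect to discrete containment). -/
def ContainsRich {C : Type} {n : ℕ} (r : ℕ) (χ : Edge n → C) : Prop :=
  ∃ χ' : Edge (2 * r - 1) → C, Rich r χ' ∧
    ∃ f : Fin (2 * r - 1) → Fin n, ∃ hf : StrictMono f,
      ∀ e : Edge (2 * r - 1), χ' e = χ (edgeMap f hf e)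

def HasDistinctSubcolorings {C : Type} (n : ℕ) (K : Coloring C) : Prop :=
  ∃ ψ : Fin n → (Edge n → C), Function.Injective ψ ∧ ∀ k, ColLe (· = ·) ⟨n, ψ k⟩ K

lemma revE_revE {n : ℕ} (e : Edge n) : revE (revE e) = e := by
  apply Subtype.ext
  simp [revE]

lemma revC_revC {n : ℕ} {C : Type} (χ : Edge n → C) : revC (revC χ) = χ := by
  funext e
  simp [revC, revE_revE]

lemma revC_injective {n : ℕ} {C : Type} : Function.Injective (@revC n C) :=
  Function.LeftInverse.injective revC_revC

lemma ColLe.revC {C : Type} {m N : ℕ} {ψ : Edge m → C} {χ : Edge N → C}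
    (h : ColLe (· = ·) ⟨m, ψ⟩ ⟨N, χ⟩) : ColLe (· = ·) ⟨m, revC ψ⟩ ⟨N, revC χ⟩ := by
  obtain ⟨f, hf, hcol⟩ := h
  have hg : StrictMono (fun i : Fin m => (f i.rev).rev) :=
    fun i j hij => Fin.rev_lt_rev.mpr (hf (Fin.rev_lt_rev.mpr hij))
  refine ⟨_, hg, fun e => ?_⟩
  have hrev : edgeMap f hf (revE e) = revE (edgeMap _ hg e) := by
    apply Subtype.ext
    simp [revE, edgeMap]
  simpa only [_root_.revC, hrev] using hcol (revE e)

lemma HasDistinctSubcolorings.of_revC {C : Type} {n m : ℕ} {χ : Edge m → C}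
    (h : HasDistinctSubcolorings n ⟨m, revC χ⟩) : HasDistinctSubcolorings n ⟨m, χ⟩ := by
  obtain ⟨ψ, hinj, hle⟩ := h
  refine ⟨fun k => revC (ψ k), revC_injective.comp hinj, fun k => ?_⟩
  simpa only [revC_revC] using (hle k).revC

lemma edgeMap_mkE {a b : ℕ} (f : Fin a → Fin b) (hf : StrictMono f) {i j i' j' : ℕ}
    (hij : i < j) (hj : j < a) (hij' : i' < j') (hj' : j' < b)
    (hfi : (f ⟨i, hij.trans hj⟩ : ℕ) = i') (hfj : (f ⟨j, hj⟩ : ℕ) = j') :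
    edgeMap f hf (mkE i j hij hj) = mkE i' j' hij' hj' := by
  apply Subtype.ext
  ext <;> simp [edgeMap, mkE, hfi, hfj]

lemma hasDistinctSubcolorings_of_separating {C : Type} {n m : ℕ} (χ : Edge m → C)
    (f : Fin n → Fin n → Fin m) (hf : ∀ k, StrictMono (f k))
    (hsep : ∀ k k' : Fin n, k < k' →
      ∃ e : Edge n, χ (edgeMap (f k) (hf k) e) ≠ χ (edgeMap (f k') (hf k') e)) :
    HasDistinctSubcolorings n ⟨m, χ⟩ := by
  refine ⟨fun k e => χ (edgeMap (f k) (hf k) e),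
    Function.Injective.of_lt_imp_ne fun k k' hkk' heq => ?_, fun k => ⟨f k, hf k, fun _ => rfl⟩⟩
  obtain ⟨e, he⟩ := hsep k k' hkk'
  exact he (congrFun heq e)

/-- The windows of `n` consecutive vertices: the `k`-th one sees the `b`-edge as its
`(n-1-k)`-th path edge, and all earlier windows see an `a`-edge there. -/
lemma hasDistinctSubcolorings_of_type1 {C : Type} {n : ℕ} {χ : Edge (2 * n - 1) → C}
    (h : Type1 n χ) : HasDistinctSubcolorings n ⟨2 * n - 1, χ⟩ := by
  obtain ⟨a, b, hab, ha, hb⟩ := h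
  let f : Fin n → Fin n → Fin (2 * n - 1) := fun k i => ⟨k + i, by omega⟩
  have hf : ∀ k, StrictMono (f k) := fun k _ _ hij => Fin.mk_lt_mk.mpr (Nat.add_lt_add_left hij k)
  refine hasDistinctSubcolorings_of_separating χ f hf fun k k' (hkk' : (k : ℕ) < k') => ?_
  have hk' : (k' : ℕ) < n := k'.2
  refine ⟨mkE (n - 1 - k') (n - k') (by omega) (by omega), ?_⟩
  rw [edgeMap_mkE (f k) (hf k) _ _ (by omega : k + (n - 1 - k') < k + (n - 1 - k') + 1)
      (by omega) rfl (by simp only [f]; omega),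
    edgeMap_mkE (f k') (hf k') _ _ (by omega : n - 1 < n) (by omega) (by simp only [f]; omega)
      (by simp only [f]; omega),
    ha _ (by omega), hb (by omega)]
  exact hab

/-- The `k`-th embedding keeps the first `n-k` vertices and then jumps over `k` vertices, so
the edge `{0, n-k}` of the `k`-th copy is the `b`-edge `{0, n}`, while in every earlier copy it
is an `a`-edge of the star at `0`. -/
lemma hasDistinctSubcolorings_of_type2 {C : Type} {n : ℕ} {χ : Edge (2 * n - 1) → C}
    (h : Type2 n χ) : HasDistinctSubcolorings n ⟨2 * n - 1, χ⟩ := by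
  obtain ⟨a, b, hab, ha, hb⟩ := h
  let f : Fin n → Fin n → Fin (2 * n - 1) := fun k i =>
    ⟨if i + k < n then i else i + k, by split <;> omega⟩
  have hf : ∀ k, StrictMono (f k) := fun k i j (hij : (i : ℕ) < j) =>
    Fin.mk_lt_mk.mpr (by split <;> split <;> omega)
  refine hasDistinctSubcolorings_of_separating χ f hf fun k k' (hkk' : (k : ℕ) < k') => ?_
  have hk' : (k' : ℕ) < n := k'.2
  refine ⟨mkE 0 (n - k') (by omega) (by omega), ?_⟩
  have hfval : ∀ k (i : ℕ) (hi : i < n), (f k ⟨i, hi⟩ : ℕ) = if i + k < n then i else i + k :=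
    fun _ _ _ => rfl
  rw [edgeMap_mkE (f k) (hf k) _ _ (by omega : 0 < n - k') (by omega)
      (by rw [hfval]; split <;> omega) (by rw [hfval]; split <;> omega),
    edgeMap_mkE (f k') (hf k') _ _ (by omega : 0 < n) (by omega)
      (by rw [hfval]; split <;> omega) (by rw [hfval]; split <;> omega),
    ha _ (by omega) (by omega), hb (by omega)]
  exact hab

lemma hasDistinctSubcolorings_of_rich {C : Type} {n : ℕ} {χ : Edge (2 * n - 1) → C}
    (h : Rich n χ) : HasDistinctSubcolorings n ⟨2 * n - 1, χ⟩ := by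
  rcases h with h | h | h | h
  · exact hasDistinctSubcolorings_of_type1 h
  · exact (hasDistinctSubcolorings_of_type1 h).of_revC
  · exact hasDistinctSubcolorings_of_type2 h
  · exact (hasDistinctSubcolorings_of_type2 h).of_revC

lemma finite_slice {C : Type} [Finite C] (X : Set (Coloring C)) (n : ℕ) :
    Finite {K : Coloring C // K ∈ X ∧ K.1 = n} := by
  refine Set.Finite.to_subtype ((Set.finite_range (Sigma.mk n)).subset ?_)
  rintro ⟨m, χ⟩ ⟨-, rfl : m = n⟩
  exact ⟨χ, rfl⟩

lemma IsIdeal.le_card_slice {C : Type} [Finite C] {X : Set (Coloring C)}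
    (hX : IsIdeal (· = ·) X) {n : ℕ} {K : Coloring C} (hK : K ∈ X)
    (h : HasDistinctSubcolorings n K) :
    n ≤ Nat.card {K : Coloring C // K ∈ X ∧ K.1 = n} := by
  obtain ⟨ψ, hinj, hle⟩ := h
  have := finite_slice X n
  have hemb : Function.Injective fun k : Fin n =>
      (⟨⟨n, ψ k⟩, hX _ _ (hle k) hK, rfl⟩ : {K : Coloring C // K ∈ X ∧ K.1 = n}) :=
    fun k k' hkk' => hinj (sigma_mk_injective (Subtype.ext_iff.mp hkk' :))
  simpa using Nat.card_le_card_of_injective _ hemb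

theorem stmt_10 (l : ℕ) (X : Set (Coloring (Fin l))) (hX : IsIdeal (· = ·) X)
    (h : ∀ r : ℕ, 1 ≤ r → ∃ χ : Edge (2 * r - 1) → Fin l,
        Rich r χ ∧ (⟨2 * r - 1, χ⟩ : Coloring (Fin l)) ∈ X) :
    ∀ n : ℕ, 1 ≤ n → n ≤ Nat.card {K : Coloring (Fin l) // K ∈ X ∧ K.1 = n} := by
  intro n hn
  obtain ⟨χ, hrich, hmem⟩ := h n hn
  exact hX.le_card_slice hmem (hasDistinctSubcolorings_of_rich hrich)
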